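/- arXiv:1802.09098 — 2 statements merged into one kernel-verified Lean document; each statement's English description precedes it below -/
import Mathlib

section
/- Hallucination monotonicity: fix a deterministic vector of p-values p_1,...,p_T ∈ [0,1] and monotone rules f_i, g_i generating levels α_i, thresholds λ_i (with α_i ≤ λ_i) and indicators R_i = 1{p_i ≤ α_i}, C_i = 1{p_i ≤ λ_i}. Let p̃ be the vector obtained from p by replacing the t-th coordinate with 1, and let α̃_i, λ̃_i, R̃_i, C̃_i be the corresponding quantities computed from p̃. Then: (i) R̃_i = R_i, C̃_i = C_i for all i < t and α̃_i = α_i for all i ≤ t; (ii) R̃_t = C̃_t = 0; and (iii) R̃_i ≤ R_i and C̃_i ≤ C_i for all i ≤ T. -/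
/-- The rejection-and-candidacy indicator history available just before testing index `i`,
for a deterministic sequence of p-values `p` with levels `al` and thresholds `la`:
the pair of indicators `R_j = 1{p_j ≤ α_j}` and `C_j = 1{p_j ≤ λ_j}` for `j < i`. -/
noncomputable def detHistory (p al la : ℕ → ℝ) (i : ℕ) : (ℕ → Bool) × (ℕ → Bool) :=
  (fun j => decide (j < i ∧ p j ≤ al j), fun j => decide (j < i ∧ p j ≤ la j))

/-- Hallucination monotonicity: fix deterministic p-values `p_0, ..., p_{T-1} ∈ [0,1]` and
monotone rules `f_i, g_i` generating levels `α_i`, thresholds `λ_i` (with `α_i ≤ λ_i`) and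
indicators `R_i = 1{p_i ≤ α_i}`, `C_i = 1{p_i ≤ λ_i}`.  Let `p̃` be obtained from `p` by
replacing the `t`-th coordinate with `1`, with corresponding `α̃_i, λ̃_i, R̃_i, C̃_i`.  Then:
(i) `R̃_i = R_i` and `C̃_i = C_i` for all `i < t`, and `α̃_i = α_i` for all `i ≤ t`;
(ii) `R̃_t = C̃_t = 0`; and (iii) `R̃_i ≤ R_i` and `C̃_i ≤ C_i` for all `i < T`. -/
theorem hallucination_monotone
    (T : ℕ) (p : ℕ → ℝ) (hp : ∀ i, i < T → p i ∈ Set.Icc (0 : ℝ) 1)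
    (f g : ℕ → (ℕ → Bool) × (ℕ → Bool) → ℝ)
    (hfmono : ∀ i, Monotone (f i)) (hgmono : ∀ i, Monotone (g i))
    -- the original levels and thresholds, generated by the rules from `p`
    (al la : ℕ → ℝ)
    (hal : ∀ i, i < T → al i = f i (detHistory p al la i))
    (hla : ∀ i, i < T → la i = g i (detHistory p al la i))
    (hrange : ∀ i, i < T → al i ∈ Set.Ioo (0 : ℝ) 1 ∧ la i ∈ Set.Ioo (0 : ℝ) 1 ∧ al i ≤ la i)
    -- the hallucinated p-value vector, with the `t`-th coordinate replaced by `1`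
    (t : ℕ) (ht : t < T)
    -- the hallucinated levels and thresholds, generated by the same rules from `p̃`
    (al' la' : ℕ → ℝ)
    (hal' : ∀ i, i < T → al' i = f i (detHistory (Function.update p t 1) al' la' i))
    (hla' : ∀ i, i < T → la' i = g i (detHistory (Function.update p t 1) al' la' i))
    (hrange' : ∀ i, i < T →
      al' i ∈ Set.Ioo (0 : ℝ) 1 ∧ la' i ∈ Set.Ioo (0 : ℝ) 1 ∧ al' i ≤ la' i) :
    -- (i): unchanged indicators before time `t` and unchanged levels up to time `t`
    ((∀ i, i < t → ((Function.update p t 1 i ≤ al' i ↔ p i ≤ al i) ∧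
        (Function.update p t 1 i ≤ la' i ↔ p i ≤ la i))) ∧
      (∀ i, i ≤ t → al' i = al i)) ∧
    -- (ii): the hallucinated test at time `t` neither rejects nor is a candidate
    (¬ Function.update p t 1 t ≤ al' t ∧ ¬ Function.update p t 1 t ≤ la' t) ∧
    -- (iii): the hallucinated indicators are dominated by the original ones
    (∀ i, i < T → ((Function.update p t 1 i ≤ al' i → p i ≤ al i) ∧
        (Function.update p t 1 i ≤ la' i → p i ≤ la i))) := by
  classical
  -- Lemma A: for i ≤ t, al' i = al i and la' i = la i
  have hA : ∀ i, i ≤ t → al' i = al i ∧ la' i = la i := by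
    intro i hi
    induction i using Nat.strong_induction_on with
    | _ i IH =>
      have hiT : i < T := lt_of_le_of_lt hi ht
      have hdec : ∀ (j : ℕ) (q q' : ℝ),
          (j < i → Function.update p t 1 j = p j ∧ q = q') →
          decide (j < i ∧ Function.update p t 1 j ≤ q) = decide (j < i ∧ p j ≤ q') := by
        intro j q q' h
        apply decide_eq_decide.mpr
        constructor
        · rintro ⟨hj, hle⟩
          obtain ⟨h1, h2⟩ := h hj
          exact ⟨hj, by rw [← h1, ← h2]; exact hle⟩
        · rintro ⟨hj, hle⟩
          obtain ⟨h1, h2⟩ := h hj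
          exact ⟨hj, by rw [h1, h2]; exact hle⟩
      have hhist : detHistory (Function.update p t 1) al' la' i = detHistory p al la i := by
        unfold detHistory
        refine Prod.ext (funext fun j => hdec j _ _ ?_) (funext fun j => hdec j _ _ ?_)
        · intro hj
          have hjt : j < t := lt_of_lt_of_le hj hi
          exact ⟨Function.update_of_ne (Nat.ne_of_lt hjt) _ _, (IH j hj (le_of_lt hjt)).1⟩
        · intro hj
          have hjt : j < t := lt_of_lt_of_le hj hi
          exact ⟨Function.update_of_ne (Nat.ne_of_lt hjt) _ _, (IH j hj (le_of_lt hjt)).2⟩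
      constructor
      · rw [hal' i hiT, hal i hiT, hhist]
      · rw [hla' i hiT, hla i hiT, hhist]
  -- Lemma B: for i < T, hallucinated indicators dominated
  have hB : ∀ i, i < T → (Function.update p t 1 i ≤ al' i → p i ≤ al i) ∧
      (Function.update p t 1 i ≤ la' i → p i ≤ la i) := by
    intro i hi
    induction i using Nat.strong_induction_on with
    | _ i IH =>
      have hhist : detHistory (Function.update p t 1) al' la' i ≤ detHistory p al la i := by
        have hdec : ∀ (j : ℕ) (q q' : ℝ),
            (j < i → Function.update p t 1 j ≤ q → p j ≤ q') →
            decide (j < i ∧ Function.update p t 1 j ≤ q) ≤ decide (j < i ∧ p j ≤ q') := by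
          intro j q q' h
          by_cases hc : j < i ∧ Function.update p t 1 j ≤ q
          · simp only [decide_eq_true hc]
            have : j < i ∧ p j ≤ q' := ⟨hc.1, h hc.1 hc.2⟩
            simp [this]
          · simp [decide_eq_false hc]
        constructor
        · intro j
          exact hdec j _ _ (fun hj => (IH j hj (lt_trans hj hi)).1)
        · intro j
          exact hdec j _ _ (fun hj => (IH j hj (lt_trans hj hi)).2)
      have hle_al : al' i ≤ al i := by
        rw [hal' i hi, hal i hi]; exact hfmono i hhist
      have hle_la : la' i ≤ la i := by
        rw [hla' i hi, hla i hi]; exact hgmono i hhist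
      by_cases hit : i = t
      · subst hit
        have h1 : Function.update p i 1 i = 1 := Function.update_self i 1 p
        constructor
        · intro h
          exact absurd (h1 ▸ h) (not_le.mpr (hrange' i hi).1.2)
        · intro h
          exact absurd (h1 ▸ h) (not_le.mpr (hrange' i hi).2.1.2)
      · have h1 : Function.update p t 1 i = p i := Function.update_of_ne hit _ _
        rw [h1]
        exact ⟨fun h => le_trans h hle_al, fun h => le_trans h hle_la⟩
  refine ⟨⟨?_, fun i hi => (hA i hi).1⟩, ?_, hB⟩
  · intro i hi
    have h1 : Function.update p t 1 i = p i := Function.update_of_ne (Nat.ne_of_lt hi) _ _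
    rw [h1, (hA i (le_of_lt hi)).1, (hA i (le_of_lt hi)).2]
    exact ⟨Iff.rfl, Iff.rfl⟩
  · have h1 : Function.update p t 1 t = 1 := Function.update_self t 1 p
    rw [h1]
    exact ⟨not_le.mpr (hrange' t ht).1.2, not_le.mpr (hrange' t ht).2.1.2⟩
end

section
/- LORD FDR control: if the null p-values are independent of each other and of the non-null p-values, each null p-value is super-uniform (P(P_j ≤ u) ≤ u for all u ∈ [0,1]), the level sequence {α_t} is monotone, and the LORD estimate satisfies FDP̂_LORD(t) := (Σ_{j ≤ t} α_j)/max(|R(t)|,1) ≤ α almost surely for all t ∈ ℕ, then FDR(t) ≤ α for all t ∈ ℕ. -/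
open MeasureTheory ProbabilityTheory

/-- The rejection indicator history available just before testing hypothesis `t`:
the indicators `R_j = 1{P_j ≤ α_j}` for `j < t`, encoded as a boolean sequence. -/
noncomputable def rejHistory {Ω : Type*} (P alpha : ℕ → Ω → ℝ) (t : ℕ) (ω : Ω) : ℕ → Bool :=
  fun j => decide (j < t ∧ P j ω ≤ alpha j ω)

/-- The number of rejections `|R(t)|` among the hypotheses indexed `j ≤ t`. -/
noncomputable def numRejections {Ω : Type*} (P alpha : ℕ → Ω → ℝ) (t : ℕ) (ω : Ω) : ℝ :=
  ∑ j ∈ Finset.Iic t, if P j ω ≤ alpha j ω then (1 : ℝ) else 0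

open Classical in
/-- The number of false rejections `|H⁰ ∩ R(t)|` among the hypotheses indexed `j ≤ t`. -/
noncomputable def numFalseRejections {Ω : Type*} (H0 : Set ℕ) (P alpha : ℕ → Ω → ℝ)
    (t : ℕ) (ω : Ω) : ℝ :=
  ∑ j ∈ Finset.Iic t, if j ∈ H0 ∧ P j ω ≤ alpha j ω then (1 : ℝ) else 0

/-- The false discovery proportion `FDP(t) = |H⁰ ∩ R(t)| / max(|R(t)|, 1)`. -/
noncomputable def FDP {Ω : Type*} (H0 : Set ℕ) (P alpha : ℕ → Ω → ℝ) (t : ℕ) (ω : Ω) : ℝ :=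
  numFalseRejections H0 P alpha t ω / max (numRejections P alpha t ω) 1

/-- The LORD FDP estimate `FDP̂_LORD(t) = (Σ_{j ≤ t} α_j) / max(|R(t)|, 1)`. -/
noncomputable def FDPhatLORD {Ω : Type*} (P alpha : ℕ → Ω → ℝ) (t : ℕ) (ω : Ω) : ℝ :=
  (∑ j ∈ Finset.Iic t, alpha j ω) / max (numRejections P alpha t ω) 1

/-- The null p-values `{P_j : j ∈ H⁰}` are independent of each other and of
the non-null p-values: the family of σ-algebras consisting of `σ(P_j)` for each null `j`,
together with the σ-algebra generated by all non-null p-values, is independent. -/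
def nullsIndep {Ω : Type*} [MeasurableSpace Ω] (μ : Measure Ω) (H0 : Set ℕ)
    (P : ℕ → Ω → ℝ) : Prop :=
  ProbabilityTheory.iIndep
    (fun i : Option {j : ℕ // j ∈ H0} =>
      i.elim (⨆ j ∈ H0ᶜ, MeasurableSpace.comap (P j) inferInstance)
        (fun j => MeasurableSpace.comap (P j.1) inferInstance)) μ

/-!
For a null `j`, rerun the procedure with `P j` replaced by `0`. The level `α_j` is unchanged, and
it and the new rejection count `R̃` are functions of the other p-values, hence independent of
`P j`. By monotonicity `R̃ ≥ |R(t)|`, with equality when `P j ≤ α_j` (lowering a rejected p-value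
changes no decision). Hence, with `max(·, 1)` understood in the denominators,
`E[1{P_j ≤ α_j} / |R(t)|] = E[1{P_j ≤ α_j} / R̃] ≤ E[α_j / R̃] ≤ E[α_j / |R(t)|]`,
the middle step by super-uniformity of `P j` given the others. Summing over the nulls `j ≤ t`
bounds `FDR(t)` by `E[FDP̂_LORD(t)] ≤ α`.
-/

-- The rejections of the online procedure with level functions `f` on the realised p-values `p`
-- (see `le_alpha_iff_onlineRejects`).
noncomputable def onlineRejects (f : ℕ → (ℕ → Bool) → ℝ) (p : ℕ → ℝ) : ℕ → Bool
  | k => decide (p k ≤ f k (fun i => if _ : i < k then onlineRejects f p i else false))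

noncomputable def onlineHistory (f : ℕ → (ℕ → Bool) → ℝ) (p : ℕ → ℝ) (k : ℕ) : ℕ → Bool :=
  fun i => decide (i < k ∧ onlineRejects f p i = true)

noncomputable def onlineRejCount (f : ℕ → (ℕ → Bool) → ℝ) (p : ℕ → ℝ) (t : ℕ) : ℝ :=
  ∑ k ∈ Finset.Iic t, if onlineRejects f p k = true then (1 : ℝ) else 0

section OnlineRejects

variable (f : ℕ → (ℕ → Bool) → ℝ)

theorem onlineRejects_iff (p : ℕ → ℝ) (k : ℕ) :
    onlineRejects f p k = true ↔ p k ≤ f k (onlineHistory f p k) := by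
  rw [onlineRejects, decide_eq_true_iff]
  convert Iff.rfl using 3
  funext i
  by_cases hi : i < k <;> simp [onlineHistory, hi]

theorem onlineHistory_congr {p p' : ℕ → ℝ} (k : ℕ) (h : ∀ i < k, p i = p' i) :
    onlineHistory f p k = onlineHistory f p' k := by
  induction k using Nat.strong_induction_on with
  | _ k ih =>
    funext i
    by_cases hi : i < k
    · have hrej : onlineRejects f p i = onlineRejects f p' i := by
        rw [Bool.eq_iff_iff, onlineRejects_iff, onlineRejects_iff, h i hi,
          ih i hi fun l hl => h l (hl.trans hi)]
      simp [onlineHistory, hrej]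
    · simp [onlineHistory, hi]

theorem onlineHistory_update_self (p : ℕ → ℝ) (j : ℕ) (v : ℝ) :
    onlineHistory f (Function.update p j v) j = onlineHistory f p j :=
  onlineHistory_congr f j fun _ hi => Function.update_of_ne hi.ne v p

variable {f}

theorem onlineRejects_anti (hmono : ∀ k, Monotone (f k)) {p p' : ℕ → ℝ} (h : p' ≤ p) (k : ℕ)
    (hk : onlineRejects f p k = true) : onlineRejects f p' k = true := by
  induction k using Nat.strong_induction_on with
  | _ k ih =>
    rw [onlineRejects_iff] at hk ⊢
    refine (h k).trans (hk.trans (hmono k fun i => ?_))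
    by_cases hi : i < k
    · simpa [onlineHistory, hi, Bool.le_iff_imp] using ih i hi
    · simp [onlineHistory, hi]

theorem onlineRejCount_anti (hmono : ∀ k, Monotone (f k)) {p p' : ℕ → ℝ} (h : p' ≤ p) (t : ℕ) :
    onlineRejCount f p t ≤ onlineRejCount f p' t := by
  refine Finset.sum_le_sum fun k _ => ?_
  by_cases hk : onlineRejects f p k = true
  · simp [hk, onlineRejects_anti hmono h k hk]
  · rw [if_neg hk]
    positivity

theorem onlineRejCount_le_update (hmono : ∀ k, Monotone (f k)) {p : ℕ → ℝ} {j : ℕ} {v : ℝ}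
    (hv : v ≤ p j) (t : ℕ) :
    onlineRejCount f p t ≤ onlineRejCount f (Function.update p j v) t := by
  refine onlineRejCount_anti hmono (fun i => ?_) t
  rcases eq_or_ne i j with rfl | hi
  · simpa using hv
  · simp [hi]

end OnlineRejects

/-- The decision at `j` stays a rejection, and the other decisions see `p j` only through it. -/
theorem onlineRejects_update_of_le {f : ℕ → (ℕ → Bool) → ℝ} {p : ℕ → ℝ} {j : ℕ} {v : ℝ}
    (hv : v ≤ p j) (hrej : onlineRejects f p j = true) :
    onlineRejects f (Function.update p j v) = onlineRejects f p := by
  funext k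
  induction k using Nat.strong_induction_on with
  | _ k ih =>
    have hhist : onlineHistory f (Function.update p j v) k = onlineHistory f p k := by
      funext i
      by_cases hi : i < k <;> simp [onlineHistory, hi, ih]
    rw [Bool.eq_iff_iff, onlineRejects_iff, onlineRejects_iff, hhist]
    rcases eq_or_ne k j with rfl | hk
    · rw [onlineRejects_iff] at hrej
      exact iff_of_true ((Function.update_self k v p).trans_le (hv.trans hrej)) hrej
    · rw [Function.update_of_ne hk]

theorem onlineRejCount_update_of_le {f : ℕ → (ℕ → Bool) → ℝ} {p : ℕ → ℝ} {j : ℕ} {v : ℝ}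
    (hv : v ≤ p j) (hrej : onlineRejects f p j = true) (t : ℕ) :
    onlineRejCount f (Function.update p j v) t = onlineRejCount f p t := by
  rw [onlineRejCount, onlineRejects_update_of_le hv hrej, onlineRejCount]

theorem measurable_onlineRejects {Ω : Type*} {m : MeasurableSpace Ω}
    (f : ℕ → (ℕ → Bool) → ℝ) {Q : ℕ → Ω → ℝ} (hQ : ∀ i, Measurable (Q i)) (k : ℕ) :
    Measurable (fun ω => onlineRejects f (fun i => Q i ω) k) ∧
      Measurable (fun ω => f k (onlineHistory f (fun i => Q i ω) k)) := by
  induction k using Nat.strong_induction_on with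
  | _ k ih =>
    -- `f k` need not be measurable, but it only sees the finitely many decisions before `k`
    have hlevel : Measurable (fun ω => f k (onlineHistory f (fun i => Q i ω) k)) := by
      have hfac : (fun ω => f k (onlineHistory f (fun i => Q i ω) k)) =
          (fun v : Fin k → Bool => f k fun i => if h : i < k then v ⟨i, h⟩ else false) ∘
            fun ω i => onlineRejects f (fun i => Q i ω) i := by
        funext ω
        congr 1
        funext i
        by_cases hi : i < k <;> simp [onlineHistory, hi]
      rw [hfac]
      exact (measurable_of_countable _).comp (measurable_pi_lambda _ fun i => (ih i i.2).1)
    refine ⟨measurable_to_countable' fun b => ?_, hlevel⟩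
    have hset : {ω | onlineRejects f (fun i => Q i ω) k = true} =
        {ω | Q k ω ≤ f k (onlineHistory f (fun i => Q i ω) k)} := by
      ext ω; exact onlineRejects_iff f _ k
    have htrue : MeasurableSet {ω | onlineRejects f (fun i => Q i ω) k = true} :=
      hset ▸ measurableSet_le (hQ k) hlevel
    cases b
    · convert htrue.compl using 1
      ext ω
      simp
    · exact htrue

theorem measurable_onlineRejCount {Ω : Type*} {m : MeasurableSpace Ω}
    (f : ℕ → (ℕ → Bool) → ℝ) {Q : ℕ → Ω → ℝ} (hQ : ∀ i, Measurable (Q i)) (t : ℕ) :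
    Measurable (fun ω => onlineRejCount f (fun i => Q i ω) t) :=
  Finset.measurable_sum _ fun k _ =>
    Measurable.ite ((measurable_onlineRejects f hQ k).1 (measurableSet_singleton true))
      measurable_const measurable_const


section Independence

variable {Ω α β : Type*} {m : MeasurableSpace Ω} {μ : Measure Ω} [IsProbabilityMeasure μ]
  [MeasurableSpace α] [MeasurableSpace β]

theorem integrable_div_of_mem_Icc {g d : Ω → ℝ} (hg : Measurable g) (hd : Measurable d)
    (hg01 : ∀ ω, g ω ∈ Set.Icc (0 : ℝ) 1) (hd1 : ∀ ω, 1 ≤ d ω) :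
    Integrable (fun ω => g ω / d ω) μ := by
  refine Integrable.of_bound (hg.div hd).aestronglyMeasurable 1 (ae_of_all _ fun ω => ?_)
  have hd0 : 0 < d ω := one_pos.trans_le (hd1 ω)
  rw [Real.norm_eq_abs, abs_of_nonneg (div_nonneg (hg01 ω).1 hd0.le)]
  exact div_le_one_of_le₀ ((hg01 ω).2.trans (hd1 ω)) hd0.le

theorem ProbabilityTheory.IndepFun.integral_comp_eq_integral_integral {X : Ω → α} {W : Ω → β}
    (hX : Measurable X) (hW : Measurable W) (hXW : IndepFun X W μ) {φ : α × β → ℝ}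
    (hφ : Measurable φ) (hint : Integrable (fun ω => φ (X ω, W ω)) μ) :
    ∫ ω, φ (X ω, W ω) ∂μ = ∫ ω, ∫ x, φ (x, W ω) ∂(μ.map X) ∂μ := by
  have hmap := (indepFun_iff_map_prod_eq_prod_map_map hX.aemeasurable hW.aemeasurable).mp hXW
  have hint' : Integrable φ ((μ.map X).prod (μ.map W)) := by
    rw [← hmap, integrable_map_measure hφ.aestronglyMeasurable (hX.prodMk hW).aemeasurable]
    exact hint
  calc ∫ ω, φ (X ω, W ω) ∂μ = ∫ z, φ z ∂((μ.map X).prod (μ.map W)) := by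
        rw [← hmap, integral_map (hX.prodMk hW).aemeasurable hφ.aestronglyMeasurable]
    _ = ∫ w, ∫ x, φ (x, w) ∂(μ.map X) ∂(μ.map W) := integral_prod_symm φ hint'
    _ = ∫ ω, ∫ x, φ (x, W ω) ∂(μ.map X) ∂μ :=
        integral_map hW.aemeasurable hint'.integral_prod_right.aestronglyMeasurable

theorem integral_ite_le_div_le_integral_div {X A D : Ω → ℝ} (hX : Measurable X)
    (hA : Measurable A) (hD : Measurable D) (hXAD : IndepFun X (fun ω => (A ω, D ω)) μ)
    (hsuper : ∀ u ∈ Set.Icc (0 : ℝ) 1, μ {ω | X ω ≤ u} ≤ ENNReal.ofReal u)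
    (hA01 : ∀ ω, A ω ∈ Set.Icc (0 : ℝ) 1) (hD1 : ∀ ω, 1 ≤ D ω) :
    ∫ ω, (if X ω ≤ A ω then (1 : ℝ) else 0) / D ω ∂μ ≤ ∫ ω, A ω / D ω ∂μ := by
  have hD0 : ∀ ω, 0 < D ω := fun ω => one_pos.trans_le (hD1 ω)
  set φ : ℝ × ℝ × ℝ → ℝ := fun z => (if z.1 ≤ z.2.1 then (1 : ℝ) else 0) / z.2.2
  have hφ : Measurable φ :=
    (Measurable.ite (measurableSet_le measurable_fst measurable_snd.fst) measurable_const
      measurable_const).div measurable_snd.snd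
  have hind : Measurable fun ω => if X ω ≤ A ω then (1 : ℝ) else 0 :=
    Measurable.ite (measurableSet_le hX hA) measurable_const measurable_const
  have hinner : ∀ ω, ∫ x, φ (x, A ω, D ω) ∂(μ.map X) ≤ A ω / D ω := by
    intro ω
    have hIic : (μ.map X).real (Set.Iic (A ω)) ≤ A ω := by
      rw [measureReal_def, Measure.map_apply hX measurableSet_Iic]
      exact ENNReal.toReal_le_of_le_ofReal (hA01 ω).1 (hsuper _ (hA01 ω))
    calc ∫ x, φ (x, A ω, D ω) ∂(μ.map X)
        = (∫ x, (Set.Iic (A ω)).indicator 1 x ∂(μ.map X)) / D ω := by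
          rw [← integral_div]
          congr 1
      _ ≤ A ω / D ω := by
          rw [integral_indicator_one measurableSet_Iic]
          exact div_le_div_of_nonneg_right hIic (hD0 ω).le
  calc ∫ ω, (if X ω ≤ A ω then (1 : ℝ) else 0) / D ω ∂μ
      = ∫ ω, ∫ x, φ (x, A ω, D ω) ∂(μ.map X) ∂μ :=
        hXAD.integral_comp_eq_integral_integral hX (hA.prodMk hD) hφ
          (integrable_div_of_mem_Icc hind hD (fun ω => by split_ifs <;> simp) hD1)
    _ ≤ ∫ ω, A ω / D ω ∂μ :=
        integral_mono_of_nonneg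
          (ae_of_all _ fun ω => integral_nonneg fun x => div_nonneg (by positivity) (hD0 ω).le)
          (integrable_div_of_mem_Icc hA hD hA01 hD1)
          (ae_of_all _ hinner)

end Independence

section LevelSequence

variable {Ω : Type*} {P alpha : ℕ → Ω → ℝ} {f : ℕ → (ℕ → Bool) → ℝ}

theorem rejHistory_eq_onlineHistory (hpred : ∀ t ω, alpha t ω = f t (rejHistory P alpha t ω))
    (ω : Ω) (k : ℕ) : rejHistory P alpha k ω = onlineHistory f (fun i => P i ω) k := by
  induction k using Nat.strong_induction_on with
  | _ k ih =>
    funext i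
    by_cases hi : i < k
    · have hrej : P i ω ≤ alpha i ω ↔ onlineRejects f (fun i => P i ω) i = true := by
        rw [onlineRejects_iff, hpred i ω, ih i hi]
      simp [rejHistory, onlineHistory, hi, hrej]
    · simp [rejHistory, onlineHistory, hi]

theorem le_alpha_iff_onlineRejects (hpred : ∀ t ω, alpha t ω = f t (rejHistory P alpha t ω))
    (ω : Ω) (k : ℕ) : P k ω ≤ alpha k ω ↔ onlineRejects f (fun i => P i ω) k = true := by
  rw [onlineRejects_iff, hpred k ω, rejHistory_eq_onlineHistory hpred]

theorem alpha_eq_level (hpred : ∀ t ω, alpha t ω = f t (rejHistory P alpha t ω))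
    (ω : Ω) (k : ℕ) : alpha k ω = f k (onlineHistory f (fun i => P i ω) k) := by
  rw [hpred k ω, rejHistory_eq_onlineHistory hpred]

theorem numRejections_eq_onlineRejCount
    (hpred : ∀ t ω, alpha t ω = f t (rejHistory P alpha t ω)) (ω : Ω) (t : ℕ) :
    numRejections P alpha t ω = onlineRejCount f (fun i => P i ω) t :=
  Finset.sum_congr rfl fun k _ => by simp only [le_alpha_iff_onlineRejects hpred]

theorem measurable_numRejections [MeasurableSpace Ω] (hPmeas : ∀ j, Measurable (P j))
    (hameas : ∀ j, Measurable (alpha j)) (t : ℕ) : Measurable (numRejections P alpha t) :=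
  Finset.measurable_sum _ fun k _ =>
    Measurable.ite (measurableSet_le (hPmeas k) (hameas k)) measurable_const measurable_const

theorem measurable_alpha [MeasurableSpace Ω] (hPmeas : ∀ j, Measurable (P j))
    (hpred : ∀ t ω, alpha t ω = f t (rejHistory P alpha t ω)) (k : ℕ) :
    Measurable (alpha k) := by
  simpa only [← alpha_eq_level hpred] using (measurable_onlineRejects f hPmeas k).2

end LevelSequence

abbrev sigmaAlgebraExcept {Ω : Type*} (P : ℕ → Ω → ℝ) (j : ℕ) : MeasurableSpace Ω :=
  ⨆ i ∈ ({j}ᶜ : Set ℕ), MeasurableSpace.comap (P i) inferInstance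

theorem sigmaAlgebraExcept_le {Ω : Type*} [m0 : MeasurableSpace Ω] {P : ℕ → Ω → ℝ}
    (hPmeas : ∀ j, Measurable (P j)) (j : ℕ) : sigmaAlgebraExcept P j ≤ m0 :=
  iSup₂_le fun i _ => (hPmeas i).comap_le

theorem measurable_sigmaAlgebraExcept_update {Ω : Type*} (P : ℕ → Ω → ℝ) (j : ℕ) (v : ℝ)
    (i : ℕ) :
    Measurable[sigmaAlgebraExcept P j] fun ω => Function.update (fun i => P i ω) j v i := by
  rcases eq_or_ne i j with rfl | hi
  · simp
  · have hPi : Measurable[sigmaAlgebraExcept P j] (P i) :=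
      measurable_iff_comap_le.mpr (le_biSup (fun i => MeasurableSpace.comap (P i) _) hi)
    simpa [Function.update_of_ne hi] using hPi

theorem nullsIndep.indepFun_of_measurable {Ω β : Type*} [m0 : MeasurableSpace Ω]
    [MeasurableSpace β] {μ : Measure Ω} {H0 : Set ℕ} {P : ℕ → Ω → ℝ}
    (hindep : nullsIndep μ H0 P) (hPmeas : ∀ j, Measurable (P j)) {j : ℕ} (hj : j ∈ H0)
    {W : Ω → β}
    (hW : Measurable[sigmaAlgebraExcept P j] W) :
    IndepFun (P j) W μ := by
  set σ : Option {i : ℕ // i ∈ H0} → MeasurableSpace Ω := fun o =>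
    o.elim (⨆ i ∈ H0ᶜ, MeasurableSpace.comap (P i) inferInstance)
      (fun i => MeasurableSpace.comap (P i.1) inferInstance)
  have hσ : ∀ o, σ o ≤ m0 := by
    rintro (_ | i)
    · exact iSup₂_le fun i _ => (hPmeas i).comap_le
    · exact (hPmeas i.1).comap_le
  have hrest : sigmaAlgebraExcept P j ≤
      ⨆ o ∈ ({some ⟨j, hj⟩} : Set (Option {i : ℕ // i ∈ H0}))ᶜ, σ o := by
    refine iSup₂_le fun i hi => ?_
    by_cases hiH : i ∈ H0
    · exact le_biSup σ (show some ⟨i, hiH⟩ ∈ ({some ⟨j, hj⟩} : Set (Option {i // i ∈ H0}))ᶜ by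
        simpa using hi)
    · have hnone : MeasurableSpace.comap (P i) inferInstance ≤ σ none :=
        le_biSup (fun i => MeasurableSpace.comap (P i) inferInstance) hiH
      exact hnone.trans
        (le_biSup σ (show none ∈ ({some ⟨j, hj⟩} : Set (Option {i // i ∈ H0}))ᶜ by simp))
  have h := indep_biSup_compl hσ hindep ({some ⟨j, hj⟩} : Set (Option {i // i ∈ H0}))
  simp only [Set.mem_singleton_iff, iSup_iSup_eq_left] at h
  exact indep_of_indep_of_le_right h (hW.comap_le.trans hrest)

theorem integral_rejected_div_le_integral_alpha_div {Ω : Type*} [MeasurableSpace Ω]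
    {μ : Measure Ω} [IsProbabilityMeasure μ] {P alpha : ℕ → Ω → ℝ} {H0 : Set ℕ}
    (hPmeas : ∀ j, Measurable (P j)) (hP0 : ∀ j ω, 0 ≤ P j ω)
    (ha01 : ∀ j ω, alpha j ω ∈ Set.Icc (0 : ℝ) 1) (hindep : nullsIndep μ H0 P)
    (hnull : ∀ j ∈ H0, ∀ u ∈ Set.Icc (0 : ℝ) 1, μ {ω | P j ω ≤ u} ≤ ENNReal.ofReal u)
    {f : ℕ → (ℕ → Bool) → ℝ} (hpred : ∀ t ω, alpha t ω = f t (rejHistory P alpha t ω))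
    (hmono : ∀ t, Monotone (f t)) (t : ℕ) {j : ℕ} (hj : j ∈ H0) :
    ∫ ω, (if P j ω ≤ alpha j ω then (1 : ℝ) else 0) / max (numRejections P alpha t ω) 1 ∂μ
      ≤ ∫ ω, alpha j ω / max (numRejections P alpha t ω) 1 ∂μ := by
  set N : Ω → ℝ := fun ω => max (numRejections P alpha t ω) 1
  set p0 : ℕ → Ω → ℝ := fun i ω => Function.update (fun i => P i ω) j 0 i
  have hp0 : ∀ i, Measurable[sigmaAlgebraExcept P j] (p0 i) :=
    measurable_sigmaAlgebraExcept_update P j 0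
  set D : Ω → ℝ := fun ω => max (onlineRejCount f (fun i => p0 i ω) t) 1
  have hN : ∀ ω, N ω = max (onlineRejCount f (fun i => P i ω) t) 1 := fun ω => by
    simp only [N, numRejections_eq_onlineRejCount hpred]
  have hND : ∀ ω, N ω ≤ D ω := fun ω => by
    rw [hN]
    exact max_le_max_right 1 (onlineRejCount_le_update hmono (hP0 j ω) t)
  have hN_eq_D : ∀ ω, P j ω ≤ alpha j ω → N ω = D ω := fun ω h => by
    rw [hN, ← onlineRejCount_update_of_le (hP0 j ω) ((le_alpha_iff_onlineRejects hpred ω j).mp h)]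
  have halpha : alpha j = fun ω => f j (onlineHistory f (fun i => p0 i ω) j) := by
    funext ω
    rw [alpha_eq_level hpred, onlineHistory_update_self]
  have hAG : Measurable[sigmaAlgebraExcept P j] (alpha j) :=
    halpha ▸ (measurable_onlineRejects f hp0 j).2
  have hDG : Measurable[sigmaAlgebraExcept P j] D :=
    (measurable_onlineRejCount f hp0 t).max measurable_const
  have hA := hAG.mono (sigmaAlgebraExcept_le hPmeas j) le_rfl
  have hD := hDG.mono (sigmaAlgebraExcept_le hPmeas j) le_rfl
  have hNmeas : Measurable N :=
    (measurable_numRejections hPmeas (measurable_alpha hPmeas hpred) t).max measurable_const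
  have hN1 : ∀ ω, 1 ≤ N ω := fun ω => le_max_right _ _
  calc ∫ ω, (if P j ω ≤ alpha j ω then (1 : ℝ) else 0) / N ω ∂μ
      = ∫ ω, (if P j ω ≤ alpha j ω then (1 : ℝ) else 0) / D ω ∂μ := by
        refine integral_congr_ae (ae_of_all _ fun ω => ?_)
        by_cases h : P j ω ≤ alpha j ω
        · simp only [h, if_true, hN_eq_D ω h]
        · simp only [h, if_false, zero_div]
    _ ≤ ∫ ω, alpha j ω / D ω ∂μ :=
        integral_ite_le_div_le_integral_div (hPmeas j) hA hD
          (hindep.indepFun_of_measurable hPmeas hj (hAG.prodMk hDG)) (hnull j hj) (ha01 j)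
          fun ω => le_max_right _ _
    _ ≤ ∫ ω, alpha j ω / N ω ∂μ := by
        refine integral_mono ?_ ?_ fun ω =>
          div_le_div_of_nonneg_left (ha01 j ω).1 (one_pos.trans_le (hN1 ω)) (hND ω)
        · exact integrable_div_of_mem_Icc hA hD (ha01 j) fun ω => le_max_right _ _
        · exact integrable_div_of_mem_Icc (measurable_alpha hPmeas hpred j) hNmeas (ha01 j) hN1

theorem FDPhatLORD_eq_sum {Ω : Type*} (P alpha : ℕ → Ω → ℝ) (t : ℕ) (ω : Ω) :
    FDPhatLORD P alpha t ω =
      ∑ k ∈ Finset.Iic t, alpha k ω / max (numRejections P alpha t ω) 1 :=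
  Finset.sum_div _ _ _

section FDR

variable {Ω : Type*} [MeasurableSpace Ω] {μ : Measure Ω} [IsProbabilityMeasure μ]
  {P alpha : ℕ → Ω → ℝ}

theorem integrable_alpha_div_max_numRejections (hPmeas : ∀ j, Measurable (P j))
    (hameas : ∀ j, Measurable (alpha j)) (ha01 : ∀ j ω, alpha j ω ∈ Set.Icc (0 : ℝ) 1)
    (t k : ℕ) : Integrable (fun ω => alpha k ω / max (numRejections P alpha t ω) 1) μ :=
  integrable_div_of_mem_Icc (hameas k)
    ((measurable_numRejections hPmeas hameas t).max measurable_const) (ha01 k)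
    fun _ => le_max_right _ _

theorem integral_FDP_le_integral_FDPhatLORD {H0 : Set ℕ} (hPmeas : ∀ j, Measurable (P j))
    (hP0 : ∀ j ω, 0 ≤ P j ω) (ha01 : ∀ j ω, alpha j ω ∈ Set.Icc (0 : ℝ) 1)
    (hindep : nullsIndep μ H0 P)
    (hnull : ∀ j ∈ H0, ∀ u ∈ Set.Icc (0 : ℝ) 1, μ {ω | P j ω ≤ u} ≤ ENNReal.ofReal u)
    {f : ℕ → (ℕ → Bool) → ℝ} (hpred : ∀ t ω, alpha t ω = f t (rejHistory P alpha t ω))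
    (hmono : ∀ t, Monotone (f t)) (t : ℕ) :
    ∫ ω, FDP H0 P alpha t ω ∂μ ≤ ∫ ω, FDPhatLORD P alpha t ω ∂μ := by
  classical
  have hameas := measurable_alpha hPmeas hpred
  set N : Ω → ℝ := fun ω => max (numRejections P alpha t ω) 1
  have hN1 : ∀ ω, 1 ≤ N ω := fun ω => le_max_right _ _
  have hNmeas : Measurable N := (measurable_numRejections hPmeas hameas t).max measurable_const
  have hfalse : ∀ k, Integrable
      (fun ω => (if k ∈ H0 ∧ P k ω ≤ alpha k ω then (1 : ℝ) else 0) / N ω) μ := fun k =>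
    integrable_div_of_mem_Icc (Measurable.ite ((MeasurableSet.const _).inter
      (measurableSet_le (hPmeas k) (hameas k))) measurable_const measurable_const) hNmeas
      (fun ω => by split_ifs <;> simp) hN1
  have hterm : ∀ k, ∫ ω, (if k ∈ H0 ∧ P k ω ≤ alpha k ω then (1 : ℝ) else 0) / N ω ∂μ
      ≤ ∫ ω, alpha k ω / N ω ∂μ := by
    intro k
    by_cases hk : k ∈ H0
    · simpa only [hk, true_and] using integral_rejected_div_le_integral_alpha_div hPmeas hP0
        ha01 hindep hnull hpred hmono t hk
    · simpa only [hk, false_and, if_false, zero_div, integral_zero] using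
        integral_nonneg fun ω => div_nonneg (ha01 k ω).1 (zero_le_one.trans (hN1 ω))
  calc ∫ ω, FDP H0 P alpha t ω ∂μ
      = ∑ k ∈ Finset.Iic t,
          ∫ ω, (if k ∈ H0 ∧ P k ω ≤ alpha k ω then (1 : ℝ) else 0) / N ω ∂μ := by
        rw [← integral_finsetSum _ fun k _ => hfalse k]
        simp only [FDP, numFalseRejections, Finset.sum_div, N]
    _ ≤ ∑ k ∈ Finset.Iic t, ∫ ω, alpha k ω / N ω ∂μ := Finset.sum_le_sum fun k _ => hterm k
    _ = ∫ ω, FDPhatLORD P alpha t ω ∂μ := by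
        rw [← integral_finsetSum _ fun k _ =>
          integrable_alpha_div_max_numRejections hPmeas hameas ha01 t k]
        simp only [FDPhatLORD_eq_sum]

end FDR

theorem lord_fdr_control_general {Ω : Type*} [m0 : MeasurableSpace Ω]
    (μ : Measure Ω) [IsProbabilityMeasure μ]
    (P alpha : ℕ → Ω → ℝ) (H0 : Set ℕ)
    (hPmeas : ∀ j, Measurable (P j)) (hP01 : ∀ j ω, P j ω ∈ Set.Icc (0 : ℝ) 1)
    (ha01 : ∀ j ω, alpha j ω ∈ Set.Ioo (0 : ℝ) 1)
    -- independence of the nulls from each other and from the non-nulls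
    (hindep : nullsIndep μ H0 P)
    -- marginal super-uniformity of each null p-value
    (hnull : ∀ j ∈ H0, ∀ u ∈ Set.Icc (0 : ℝ) 1, μ {ω | P j ω ≤ u} ≤ ENNReal.ofReal u)
    -- predictability and monotonicity of the level sequence
    (f : ℕ → (ℕ → Bool) → ℝ)
    (hpred : ∀ t ω, alpha t ω = f t (rejHistory P alpha t ω))
    (hmono : ∀ t, Monotone (f t))
    -- target level and almost-sure control of the LORD FDP estimate
    (q : ℝ)
    (hFDPhat : ∀ t : ℕ, ∀ᵐ ω ∂μ, FDPhatLORD P alpha t ω ≤ q)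
    (t : ℕ) :
    ∫ ω, FDP H0 P alpha t ω ∂μ ≤ q := by
  have ha : ∀ j ω, alpha j ω ∈ Set.Icc (0 : ℝ) 1 := fun j ω => Set.Ioo_subset_Icc_self (ha01 j ω)
  have hFDPhat_int : Integrable (FDPhatLORD P alpha t) μ :=
    (integrable_finsetSum _ fun k _ => integrable_alpha_div_max_numRejections hPmeas
      (measurable_alpha hPmeas hpred) ha t k).congr
      (ae_of_all _ fun ω => (FDPhatLORD_eq_sum P alpha t ω).symm)
  calc ∫ ω, FDP H0 P alpha t ω ∂μ ≤ ∫ ω, FDPhatLORD P alpha t ω ∂μ :=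
        integral_FDP_le_integral_FDPhatLORD hPmeas (fun j ω => (hP01 j ω).1) ha hindep hnull hpred
          hmono t
    _ ≤ ∫ _, q ∂μ := integral_mono_ae hFDPhat_int (integrable_const q) (hFDPhat t)
    _ = q := by simp

/-- LORD FDR control: if the null p-values are independent of each other and of the
non-nulls, each null p-value is super-uniform, the level sequence is monotone, and
`FDP̂_LORD(t) ≤ α` almost surely for all `t`, then `FDR(t) ≤ α` for all `t`. -/
theorem lord_fdr_control {Ω : Type*} [m0 : MeasurableSpace Ω]
    (μ : Measure Ω) [IsProbabilityMeasure μ]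
    (P alpha : ℕ → Ω → ℝ) (H0 : Set ℕ)
    (hPmeas : ∀ j, Measurable (P j)) (hP01 : ∀ j ω, P j ω ∈ Set.Icc (0 : ℝ) 1)
    (hameas : ∀ j, Measurable (alpha j)) (ha01 : ∀ j ω, alpha j ω ∈ Set.Ioo (0 : ℝ) 1)
    -- independence of the nulls from each other and from the non-nulls
    (hindep : nullsIndep μ H0 P)
    -- marginal super-uniformity of each null p-value
    (hnull : ∀ j ∈ H0, ∀ u ∈ Set.Icc (0 : ℝ) 1, μ {ω | P j ω ≤ u} ≤ ENNReal.ofReal u)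
    -- predictability and monotonicity of the level sequence
    (f : ℕ → (ℕ → Bool) → ℝ)
    (hpred : ∀ t ω, alpha t ω = f t (rejHistory P alpha t ω))
    (hmono : ∀ t, Monotone (f t))
    -- target level and almost-sure control of the LORD FDP estimate
    (q : ℝ) (hq : q ∈ Set.Ioo (0 : ℝ) 1)
    (hFDPhat : ∀ t : ℕ, ∀ᵐ ω ∂μ, FDPhatLORD P alpha t ω ≤ q)
    (t : ℕ) :
    ∫ ω, FDP H0 P alpha t ω ∂μ ≤ q :=
  lord_fdr_control_general (m0 := m0) μ P alpha H0 hPmeas hP01 ha01 hindep hnull f hpred hmono q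
    hFDPhat t
end
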